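/- arXiv:1407.6958 — 6 statements merged into one kernel-verified Lean document; each statement's English description precedes it below -/
import Mathlib

section
/- Let G be a connected undirected multigraph without loops and x a chip-distribution on G with total number of chips greater than 2|E(G)| - |V(G)|. Then x is non-terminating: every legal chip-firing game starting from x can be continued indefinitely. -/
/- Common definitions for chip-firing on multigraphs/digraphs.

A digraph (without a fixed vertex enumeration) on a finite vertex type `V`
is given by its arc-multiplicity function `a : V → V → ℕ` (`a u v` = number
of arcs from `u` to `v`).  An undirected multigraph is the special case of a
symmetric multiplicity function `d` (`d u v` = number of edges between `u`
and `v`); then `outDeg d v = ∑ u, d v u` is the degree of `v`, and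
`∑ v, ∑ u, d v u = 2 |E|`. -/

variable {V : Type*} [Fintype V] [DecidableEq V]

/-- Outdegree of `v` (= degree in the undirected, i.e. symmetric, case). -/
def outDeg (a : V → V → ℕ) (v : V) : ℕ := ∑ u, a v u

/-- Indegree of `v`. -/
def inDeg (a : V → V → ℕ) (v : V) : ℕ := ∑ u, a u v

/-- The distribution obtained from `x` by firing the vertex `v`:
`v` loses `outDeg a v` chips and each `u` receives `a v u` chips. -/
def fire (a : V → V → ℕ) (x : V → ℕ) (v : V) : V → ℕ :=
  fun u => x u + a v u - (if u = v then outDeg a v else 0)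

/-- The distribution obtained from `x` after firing the vertices in the list
`l`, in order. -/
def run (a : V → V → ℕ) (x : V → ℕ) : List V → (V → ℕ)
  | [] => x
  | v :: l => run a (fire a x v) l

/-- The sequence of firings `l` starting from the distribution `x` is a legal
game: each fired vertex is active (has at least `outDeg` many chips) when it
is fired. -/
def LegalGame (a : V → V → ℕ) : (V → ℕ) → List V → Prop
  | _, [] => True
  | x, v :: l => outDeg a v ≤ x v ∧ LegalGame a (fire a x v) l

/-- `x` is non-terminating: after any legal game from `x` there is still an
active vertex, so every legal game can be continued indefinitely. -/
def Nonterminating (a : V → V → ℕ) (x : V → ℕ) : Prop :=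
  ∀ l : List V, LegalGame a x l → ∃ v, outDeg a v ≤ run a x l v

/-- `x` is terminating: some legal game from `x` reaches a distribution with
no active vertex. -/
def Terminates (a : V → V → ℕ) (x : V → ℕ) : Prop :=
  ∃ l : List V, LegalGame a x l ∧ ∀ v, run a x l v < outDeg a v

/-- No loops. -/
def Loopless (a : V → V → ℕ) : Prop := ∀ v, a v v = 0

/-- Connectivity of an undirected multigraph `d`. -/
def UConnected (d : V → V → ℕ) : Prop :=
  ∀ u v : V, Relation.ReflTransGen (fun p q => 0 < d p q) u v

/-- Weak connectivity of a digraph `a`. -/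
def WConnected (a : V → V → ℕ) : Prop :=
  ∀ u v : V, Relation.ReflTransGen (fun p q => 0 < a p q ∨ 0 < a q p) u v

/-- A digraph is acyclic if it has no directed cycle. -/
def AcyclicDigraph (a : V → V → ℕ) : Prop :=
  ∀ v : V, ¬ Relation.TransGen (fun p q => 0 < a p q) v v

/-- `a` is an orientation of the undirected multigraph `d`. -/
def IsOrientation (d a : V → V → ℕ) : Prop := ∀ u v, a u v + a v u = d u v

/-- A digraph is Eulerian if `d⁺(v) = d⁻(v)` for every vertex. -/
def EulerianD (a : V → V → ℕ) : Prop := ∀ v, outDeg a v = inDeg a v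

/-- `f` is a feedback arc set of the digraph `a`: a subset of the arcs whose
removal leaves an acyclic digraph. -/
def IsFAS (a f : V → V → ℕ) : Prop :=
  (∀ u v, f u v ≤ a u v) ∧ AcyclicDigraph (fun u v => a u v - f u v)

/-- Number of arcs in an arc set. -/
def arcSize (f : V → V → ℕ) : ℕ := ∑ u, ∑ v, f u v

/-- Degree of a divisor. -/
def divDeg (f : V → ℤ) : ℤ := ∑ v, f v

/-- Effective divisor. -/
def Effective (f : V → ℤ) : Prop := ∀ v, 0 ≤ f v

/-- Linear equivalence of divisors on the multigraph `d`: they differ by an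
integer combination of the columns of the Laplacian. -/
def LinEquiv (d : V → V → ℕ) (f g : V → ℤ) : Prop :=
  ∃ z : V → ℤ, ∀ v, g v = f v + ∑ u, (d v u : ℤ) * (z u - z v)

/-- `r` is the Baker–Norine rank of the divisor `f` on the multigraph `d`. -/
def IsRank (d : V → V → ℕ) (f : V → ℤ) (r : ℤ) : Prop :=
  IsLeast {m : ℤ | ∃ g : V → ℤ, Effective g ∧
    (¬ ∃ h : V → ℤ, Effective h ∧ LinEquiv d (fun v => f v - g v) h) ∧
    m = divDeg g - 1} r

/-! Firing an active vertex moves its `deg v` chips to its neighbours, so a legal game preserves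
the total number of chips. A distribution with no active vertex has at most
`∑ v, (deg v - 1) = 2|E| - |V|` chips, so one with more chips always has an active vertex. -/

section ChipConservation

variable (a : V → V → ℕ)

theorem fire_add_ite_eq {x : V → ℕ} {v : V} (hv : outDeg a v ≤ x v) (u : V) :
    fire a x v u + (if u = v then outDeg a v else 0) = x u + a v u := by
  unfold fire
  split_ifs with huv
  · subst huv
    omega
  · omega

theorem sum_fire {x : V → ℕ} {v : V} (hv : outDeg a v ≤ x v) :
    ∑ u, fire a x v u = ∑ u, x u := by
  have h := Finset.sum_congr rfl fun u (_ : u ∈ Finset.univ) => fire_add_ite_eq a hv u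
  rw [Finset.sum_add_distrib, Finset.sum_add_distrib, Finset.sum_ite_eq',
    if_pos (Finset.mem_univ v)] at h
  exact Nat.add_right_cancel h

theorem sum_run {x : V → ℕ} {l : List V} (hl : LegalGame a x l) :
    ∑ u, run a x l u = ∑ u, x u := by
  induction l generalizing x with
  | nil => rfl
  | cons v l ih =>
    obtain ⟨hv, hl⟩ := hl
    rw [run, ih hl, sum_fire a hv]

end ChipConservation

omit [DecidableEq V] in
theorem exists_outDeg_le_of_sum_lt (a : V → V → ℕ) {y : V → ℕ}
    (hy : ∑ v, outDeg a v < ∑ v, y v + Fintype.card V) : ∃ v, outDeg a v ≤ y v := by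
  by_contra! hstable
  have h : ∑ v, (y v + 1) ≤ ∑ v, outDeg a v := Finset.sum_le_sum fun v _ => hstable v
  rw [Finset.sum_add_distrib, Finset.sum_const, Finset.card_univ, smul_eq_mul, mul_one] at h
  omega

theorem stmt0_general {V : Type*} [Fintype V] [DecidableEq V]
    (d : V → V → ℕ) (x : V → ℕ)
    (hx : (∑ v, ∑ u, (d v u : ℤ)) - Fintype.card V < ∑ v, (x v : ℤ)) :
    Nonterminating d x := by
  have hchips : ∑ v, outDeg d v < ∑ v, x v + Fintype.card V := by
    unfold outDeg
    exact_mod_cast (by linarith : (∑ v, ∑ u, (d v u : ℤ)) < ∑ v, (x v : ℤ) + Fintype.card V)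
  intro l hl
  exact exists_outDeg_le_of_sum_lt d (by rwa [sum_run d hl])

/-- A chip-distribution on a connected loopless multigraph with more
than `2|E| - |V|` chips is non-terminating. -/
theorem stmt0 {V : Type*} [Fintype V] [DecidableEq V]
    (d : V → V → ℕ) (hsym : ∀ u v, d u v = d v u) (hloop : Loopless d)
    (hconn : UConnected d) (x : V → ℕ)
    (hx : (∑ v, ∑ u, (d v u : ℤ)) - Fintype.card V < ∑ v, (x v : ℤ)) :
    Nonterminating d x :=
  stmt0_general d x hx
end

section
/- Let F be a minimum cardinality feedback arc set of a digraph D. Then there exists a vertex v₀ of D such that among all edges incident to v₀, F contains exactly the in-edges of v₀ (all in-edges of v₀ belong to F, and no out-edge of v₀ belongs to F). -/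
/- Common definitions for chip-firing on multigraphs/digraphs.

A digraph (without a fixed vertex enumeration) on a finite vertex type `V`
is given by its arc-multiplicity function `a : V → V → ℕ` (`a u v` = number
of arcs from `u` to `v`).  An undirected multigraph is the special case of a
symmetric multiplicity function `d` (`d u v` = number of edges between `u`
and `v`); then `outDeg d v = ∑ u, d v u` is the degree of `v`, and
`∑ v, ∑ u, d v u = 2 |E|`. -/

variable {V : Type*} [Fintype V] [DecidableEq V]

/-
Let `v₀` be a source of the acyclic digraph `a - f`, so every in-arc of `v₀`
lies in `f`. Deleting the out-arcs of `v₀` from `f` keeps `v₀` a source (`a` has no loops), and a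
cycle can never pass through a source, so it still leaves an acyclic digraph. Since `f` is
minimum, `f` had no out-arcs of `v₀` to begin with.
-/

lemma exists_source_of_acyclic {V : Type*} [Finite V] [Nonempty V] (r : V → V → Prop)
    (h : ∀ v, ¬ Relation.TransGen r v v) : ∃ v₀, ∀ u, ¬ r u v₀ := by
  have : IsTrans V (Relation.TransGen r) := ⟨fun _ _ _ => Relation.TransGen.trans⟩
  have : Std.Irrefl (Relation.TransGen r) := ⟨h⟩
  obtain ⟨v₀, -, hmin⟩ :=
    (Finite.wellFounded_of_trans_of_irrefl (Relation.TransGen r)).has_min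
      Set.univ Set.univ_nonempty
  exact ⟨v₀, fun u hu => hmin u (Set.mem_univ u) (Relation.TransGen.single hu)⟩

lemma AcyclicDigraph.of_le_off_source {V : Type*} {b c : V → V → ℕ} (hc : AcyclicDigraph c)
    {v₀ : V} (hsrc : ∀ u, b u v₀ = 0) (hle : ∀ p, p ≠ v₀ → ∀ q, b p q ≤ c p q) :
    AcyclicDigraph b := by
  have hpath : ∀ p q, Relation.TransGen (fun p q => 0 < b p q) p q →
      q ≠ v₀ ∧ (p ≠ v₀ → Relation.TransGen (fun p q => 0 < c p q) p q) := by
    intro p q h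
    induction h with
    | single hpq =>
      exact ⟨by rintro rfl; simp_all, fun hp => .single (hpq.trans_le (hle _ hp _))⟩
    | tail _ hqr ih =>
      exact ⟨by rintro rfl; simp_all, fun hp => (ih.2 hp).tail (hqr.trans_le (hle _ ih.1 _))⟩
  intro v hv
  obtain ⟨hne, hcyc⟩ := hpath v v hv
  exact hc v (hcyc hne)

lemma IsFAS.update_source_eq_zero {V : Type*} [DecidableEq V] {a f : V → V → ℕ}
    (hf : IsFAS a f) {v₀ : V} (hloop : a v₀ v₀ = 0) (hsrc : ∀ u, a u v₀ - f u v₀ = 0) :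
    IsFAS a (Function.update f v₀ 0) := by
  refine ⟨fun u v => ?_, hf.2.of_le_off_source (v₀ := v₀) (fun u => ?_) fun p hp q => ?_⟩
  · rcases eq_or_ne u v₀ with rfl | hu
    · simp
    · simpa [hu] using hf.1 u v
  · rcases eq_or_ne u v₀ with rfl | hu
    · simp [hloop]
    · simpa [hu] using hsrc u
  · simp [hp]

lemma arcSize_eq_arcSize_update_zero_add (f : V → V → ℕ) (v : V) :
    arcSize f = arcSize (Function.update f v 0) + ∑ w, f v w := by
  unfold arcSize
  rw [Fintype.sum_eq_add_sum_compl v, Fintype.sum_eq_add_sum_compl v (fun u => ∑ w, _)]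
  simp only [Function.update_self, Pi.zero_apply, Finset.sum_const_zero, zero_add]
  rw [add_comm]
  congr 1
  refine Finset.sum_congr rfl fun u hu => ?_
  rw [Function.update_of_ne (by simpa using hu)]

theorem stmt6_general {V : Type*} [Fintype V] [DecidableEq V] [Nonempty V]
    (a : V → V → ℕ) (hloop : Loopless a)
    (f : V → V → ℕ) (hfas : IsFAS a f)
    (hmin : ∀ g : V → V → ℕ, IsFAS a g → arcSize f ≤ arcSize g) :
    ∃ v₀ : V, (∀ u, f u v₀ = a u v₀) ∧ (∀ u, f v₀ u = 0) := by
  obtain ⟨v₀, hv₀⟩ := exists_source_of_acyclic _ hfas.2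
  have hsrc : ∀ u, a u v₀ - f u v₀ = 0 := fun u => Nat.eq_zero_of_not_pos (hv₀ u)
  refine ⟨v₀, fun u => le_antisymm (hfas.1 u v₀) (Nat.sub_eq_zero_iff_le.mp (hsrc u)), ?_⟩
  have hsize := hmin _ (hfas.update_source_eq_zero (hloop v₀) hsrc)
  rw [arcSize_eq_arcSize_update_zero_add f v₀] at hsize
  have hrow : ∑ w, f v₀ w = 0 := by omega
  exact fun u => Finset.sum_eq_zero_iff.mp hrow u (Finset.mem_univ u)

/-- a minimum cardinality feedback arc set `f` of a digraph contains,
for some vertex `v₀`, exactly the in-edges of `v₀` among the edges incident to `v₀`. -/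
theorem stmt6 {V : Type*} [Fintype V] [DecidableEq V] [Nonempty V]
    (a : V → V → ℕ) (hloop : Loopless a) (hconn : WConnected a)
    (f : V → V → ℕ) (hfas : IsFAS a f)
    (hmin : ∀ g : V → V → ℕ, IsFAS a g → arcSize f ≤ arcSize g) :
    ∃ v₀ : V, (∀ u, f u v₀ = a u v₀) ∧ (∀ u, f v₀ u = 0) :=
  stmt6_general a hloop f hfas hmin
end

section
/- Let D be a connected Eulerian digraph without loops and x a chip-distribution on D. If at some point of a legal chip-firing game from x every vertex has already fired at least once, then from the current distribution there is an ordering v₁, …, v_n of all vertices such that firing them in this order (once each) is a legal sequence of firings. -/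
/- Common definitions for chip-firing on multigraphs/digraphs.

A digraph (without a fixed vertex enumeration) on a finite vertex type `V`
is given by its arc-multiplicity function `a : V → V → ℕ` (`a u v` = number
of arcs from `u` to `v`).  An undirected multigraph is the special case of a
symmetric multiplicity function `d` (`d u v` = number of edges between `u`
and `v`); then `outDeg d v = ∑ u, d v u` is the degree of `v`, and
`∑ v, ∑ u, d v u = 2 |E|`. -/

variable {V : Type*} [Fintype V] [DecidableEq V]

/-! Order the vertices by the time of their last firing; `List.dedup` does exactly this, since it
keeps the last occurrence of each element. After its last firing, `vᵢ` still holds at least the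
chips sent to it by the vertices fired later, i.e. by `v_{i+1}, …, vₙ`. Firing `v₁, …, v_{i-1}`
first sends it the chips along its remaining in-arcs, so it then holds at least
`d⁻(vᵢ) = d⁺(vᵢ)` chips (there are no loops), and is active. -/

def inflow (a : V → V → ℕ) (m : List V) (v : V) : ℕ := (m.map (a · v)).sum

omit [Fintype V] [DecidableEq V] in
lemma inflow_append (a : V → V → ℕ) (p q : List V) (v : V) :
    inflow a (p ++ q) v = inflow a p v + inflow a q v := by
  simp [inflow]

omit [Fintype V] [DecidableEq V] in
lemma inflow_cons (a : V → V → ℕ) (u : V) (m : List V) (v : V) :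
    inflow a (u :: m) v = a u v + inflow a m v := by
  simp [inflow]

omit [Fintype V] [DecidableEq V] in
lemma inflow_le_of_sublist (a : V → V → ℕ) {m m' : List V} (h : m.Sublist m') (v : V) :
    inflow a m v ≤ inflow a m' v :=
  (h.map _).sum_le_sum fun _ _ => Nat.zero_le _

lemma inDeg_eq_inflow (a : V → V → ℕ) {m : List V} (hnd : m.Nodup) (hm : ∀ u, u ∈ m) (v : V) :
    inDeg a v = inflow a m v := by
  rw [inflow, ← List.sum_toFinset _ hnd, Finset.eq_univ_of_forall fun u => List.mem_toFinset.2 (hm u)]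
  rfl

lemma fire_apply_of_ne (a : V → V → ℕ) (x : V → ℕ) {u v : V} (h : v ≠ u) :
    fire a x u v = x v + a u v := by
  simp [fire, h]

lemma run_apply_of_not_mem (a : V → V → ℕ) {m : List V} {v : V} (h : v ∉ m) (x : V → ℕ) :
    run a x m v = x v + inflow a m v := by
  induction m generalizing x with
  | nil => simp [run, inflow]
  | cons u m ih =>
    rw [List.mem_cons, not_or] at h
    rw [run, ih h.2, fire_apply_of_ne a x h.1, inflow_cons]
    ring

lemma inflow_le_run_of_dedup_eq (a : V → V → ℕ) {l : List V} (x : V → ℕ) {p q : List V} {v : V}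
    (h : l.dedup = p ++ v :: q) : inflow a q v ≤ run a x l v := by
  induction l generalizing x p with
  | nil => simp at h
  | cons b l ih =>
    rw [run]
    by_cases hb : b ∈ l
    · rw [List.dedup_cons_of_mem hb] at h
      exact ih _ h
    · rw [List.dedup_cons_of_notMem hb] at h
      match p, h with
      | [], h =>
        obtain ⟨rfl, rfl⟩ := List.cons.inj h
        rw [run_apply_of_not_mem a hb]
        exact (inflow_le_of_sublist a l.dedup_sublist _).trans (Nat.le_add_left _ _)
      | _ :: _, h => exact ih _ (List.cons.inj h).2

lemma legalGame_of_le_add_inflow (a : V → V → ℕ) {m : List V} (hnd : m.Nodup) (y : V → ℕ)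
    (h : ∀ p v q, m = p ++ v :: q → outDeg a v ≤ y v + inflow a p v) : LegalGame a y m := by
  induction m generalizing y with
  | nil => trivial
  | cons u m ih =>
    have hu := List.nodup_cons.1 hnd
    refine ⟨by simpa [inflow] using h [] u m rfl, ih hu.2 _ fun p v q hm => ?_⟩
    have hv : v ≠ u := fun hvu => hu.1 (hvu ▸ hm ▸ List.mem_append_right _ List.mem_cons_self)
    have := h (u :: p) v q (by rw [hm]; rfl)
    rw [inflow_cons] at this
    rw [fire_apply_of_ne a y hv]
    omega

lemma outDeg_eq_inflow_add_inflow (a : V → V → ℕ) (hloop : Loopless a) (heul : EulerianD a)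
    {p q : List V} {v : V} (hnd : (p ++ v :: q).Nodup) (hall : ∀ u, u ∈ p ++ v :: q) :
    outDeg a v = inflow a p v + inflow a q v := by
  rw [heul, inDeg_eq_inflow a hnd hall, inflow_append, inflow_cons, hloop]
  ring

theorem stmt10_general {V : Type*} [Fintype V] [DecidableEq V]
    (a : V → V → ℕ) (hloop : Loopless a)
    (heul : EulerianD a) (x : V → ℕ)
    (l : List V) (hall : ∀ v : V, v ∈ l) :
    ∃ l' : List V, l'.Nodup ∧ (∀ v : V, v ∈ l') ∧ LegalGame a (run a x l) l' := by
  have hcover : ∀ v, v ∈ l.dedup := fun v => List.mem_dedup.2 (hall v)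
  refine ⟨l.dedup, l.nodup_dedup, hcover, ?_⟩
  refine legalGame_of_le_add_inflow a l.nodup_dedup _ fun p v q h => ?_
  rw [h] at hcover
  have hsplit := outDeg_eq_inflow_add_inflow a hloop heul (h ▸ l.nodup_dedup) hcover
  have hlater := inflow_le_run_of_dedup_eq a x h
  omega

/-- on a connected Eulerian loopless digraph, if at some point of a
legal game every vertex has already fired, then from the current distribution the
vertices can be legally fired once each in some order. -/
theorem stmt10 {V : Type*} [Fintype V] [DecidableEq V]
    (a : V → V → ℕ) (hloop : Loopless a) (hconn : WConnected a)
    (heul : EulerianD a) (x : V → ℕ)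
    (l : List V) (hl : LegalGame a x l) (hall : ∀ v : V, v ∈ l) :
    ∃ l' : List V, l'.Nodup ∧ (∀ v : V, v ∈ l') ∧ LegalGame a (run a x l) l' :=
  stmt10_general a hloop heul x l hall
end

section
/- Let G be a connected graph, f a divisor on G that lies under an acyclic orientation in the dual sense, i.e., its dual chip-distribution x = K⁺ - f (where K⁺(v) = d(v) - 1) satisfies x(v) ≤ d⁻_D(v) for some acyclic orientation D of G. Let K be the canonical divisor K(v) = d(v) - 2. Then rank(f) - rank(K - f) = deg(f) - |E(G)| + |V(G)|. -/
/- Common definitions for chip-firing on multigraphs/digraphs.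

A digraph (without a fixed vertex enumeration) on a finite vertex type `V`
is given by its arc-multiplicity function `a : V → V → ℕ` (`a u v` = number
of arcs from `u` to `v`).  An undirected multigraph is the special case of a
symmetric multiplicity function `d` (`d u v` = number of edges between `u`
and `v`); then `outDeg d v = ∑ u, d v u` is the degree of `v`, and
`∑ v, ∑ u, d v u = 2 |E|`. -/

variable {V : Type*} [Fintype V] [DecidableEq V]

/-! For an acyclic orientation `a` the divisor `ν_a = indeg_a - 1` is unwinnable and has degree
`|E| - |V|`, and by Riemann's inequality (via `q`-reduced divisors and Dhar's burning bound) no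
unwinnable divisor has larger degree. The hypothesis says `K - f ≤ ν_a`, so `K - f` has rank `-1`.
For the reversed orientation `ā` the divisor `g = f - ν_ā` is effective and `f - g = ν_ā` is
unwinnable of maximal degree, so `rank f = deg g - 1 = deg f - |E| + |V| - 1`. -/

open Finset

section Divisors

omit [DecidableEq V]

/-- The change of a divisor when every vertex `u` fires `z u` times, i.e. `-L z` for the
Laplacian `L`. -/
def fireBy (d : V → V → ℕ) (z : V → ℤ) (v : V) : ℤ := ∑ u, (d v u : ℤ) * (z u - z v)

def Winnable (d : V → V → ℕ) (f : V → ℤ) : Prop := ∃ h : V → ℤ, Effective h ∧ LinEquiv d f h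

variable {d : V → V → ℕ}

lemma fireBy_add (z w : V → ℤ) : fireBy d (z + w) = fireBy d z + fireBy d w := by
  ext v
  simp only [fireBy, Pi.add_apply, ← sum_add_distrib]
  exact sum_congr rfl fun u _ => by ring

lemma fireBy_sub (z w : V → ℤ) : fireBy d (z - w) = fireBy d z - fireBy d w := by
  ext v
  simp only [fireBy, Pi.sub_apply, ← sum_sub_distrib]
  exact sum_congr rfl fun u _ => by ring

lemma fireBy_smul (N : ℤ) (z : V → ℤ) : fireBy d (N • z) = N • fireBy d z := by
  ext v
  simp only [fireBy, Pi.smul_apply, smul_eq_mul, mul_sum]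
  exact sum_congr rfl fun u _ => by ring

lemma sum_fireBy (hsym : ∀ u v, d u v = d v u) (z : V → ℤ) : ∑ v, fireBy d z v = 0 := by
  have hswap : ∑ v, ∑ u, (d v u : ℤ) * z u = ∑ v, ∑ u, (d v u : ℤ) * z v := by
    rw [sum_comm]
    exact sum_congr rfl fun v _ => sum_congr rfl fun u _ => by rw [hsym]
  simp only [fireBy, mul_sub, sum_sub_distrib, hswap, sub_self]

lemma LinEquiv.trans {f g h : V → ℤ} (hfg : LinEquiv d f g) (hgh : LinEquiv d g h) :
    LinEquiv d f h := by
  obtain ⟨z, hz⟩ := hfg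
  obtain ⟨w, hw⟩ := hgh
  refine ⟨z + w, fun v => ?_⟩
  rw [hw, hz, ← fireBy, ← fireBy, ← fireBy, fireBy_add, Pi.add_apply, add_assoc]

lemma LinEquiv.divDeg_eq (hsym : ∀ u v, d u v = d v u) {f g : V → ℤ} (h : LinEquiv d f g) :
    divDeg g = divDeg f := by
  obtain ⟨z, hz⟩ := h
  have := sum_fireBy hsym z
  simp only [fireBy] at this
  simp only [divDeg, hz, sum_add_distrib, this, add_zero]

lemma divDeg_sub (f g : V → ℤ) : divDeg (f - g) = divDeg f - divDeg g :=
  sum_sub_distrib _ _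

lemma Winnable.mono {f g : V → ℤ} (hfg : ∀ v, f v ≤ g v) (hf : Winnable d f) : Winnable d g := by
  obtain ⟨h, hh, z, hz⟩ := hf
  refine ⟨fun v => h v + (g v - f v), fun v => ?_, z, fun v => ?_⟩
  · linarith [hh v, hfg v]
  · linarith [hz v]

lemma IsRank.nonempty {f : V → ℤ} {r : ℤ} (hr : IsRank d f r) : Nonempty V := by
  by_contra hV
  rw [not_nonempty_iff] at hV
  obtain ⟨g, -, hg, -⟩ := hr.1
  exact hg ⟨0, isEmptyElim, 0, isEmptyElim⟩

lemma isRank_neg_one {f : V → ℤ} (hf : ¬ Winnable d f) : IsRank d f (-1) := by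
  refine ⟨⟨0, fun _ => le_rfl, by simpa [Winnable] using hf, by simp [divDeg]⟩, ?_⟩
  rintro m ⟨g, hg, -, rfl⟩
  linarith [sum_nonneg fun v (_ : v ∈ univ) => hg v, show divDeg g = ∑ v, g v from rfl]

lemma isRank_of_not_winnable_sub {f g : V → ℤ} (hg : Effective g) (hfg : ¬ Winnable d (f - g))
    (hmax : ∀ h, ¬ Winnable d h → divDeg h ≤ divDeg (f - g)) : IsRank d f (divDeg g - 1) := by
  refine ⟨⟨g, hg, hfg, rfl⟩, ?_⟩
  rintro m ⟨g', -, hg', rfl⟩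
  have := hmax (f - g') hg'
  rw [divDeg_sub, divDeg_sub] at this
  linarith

end Divisors

section Orientation

omit [DecidableEq V]

variable {d a : V → V → ℕ}

omit [Fintype V] in
lemma IsOrientation.swap (h : IsOrientation d a) : IsOrientation d (fun u v => a v u) :=
  fun u v => (Nat.add_comm _ _).trans (h u v)

omit [Fintype V] in
lemma AcyclicDigraph.swap (h : AcyclicDigraph a) : AcyclicDigraph (fun u v => a v u) :=
  fun v hv => h v (Relation.transGen_swap.mp hv)

lemma AcyclicDigraph.exists_source (h : AcyclicDigraph a) {M : Set V} (hM : M.Nonempty) :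
    ∃ v ∈ M, ∀ u ∈ M, a u v = 0 := by
  have : IsTrans V (Relation.TransGen fun p q => 0 < a p q) :=
    ⟨fun _ _ _ => Relation.TransGen.trans⟩
  have : Std.Irrefl (Relation.TransGen fun p q => 0 < a p q) := ⟨h⟩
  obtain ⟨v, hvM, hmin⟩ :=
    (Finite.wellFounded_of_trans_of_irrefl (Relation.TransGen fun p q => 0 < a p q)).has_min M hM
  exact ⟨v, hvM, fun u hu => Nat.eq_zero_of_not_pos fun hpos => hmin u hu (.single hpos)⟩

lemma IsOrientation.outDeg_eq (h : IsOrientation d a) (v : V) :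
    outDeg d v = outDeg a v + inDeg a v := by
  simp only [outDeg, inDeg, ← sum_add_distrib, h v]

lemma IsOrientation.sum_outDeg (h : IsOrientation d a) :
    ∑ v, outDeg d v = 2 * ∑ v, outDeg a v := by
  have hin : ∑ v, inDeg a v = ∑ v, outDeg a v := sum_comm
  rw [sum_congr rfl fun v _ => h.outDeg_eq v, sum_add_distrib, hin, two_mul]

/-- At a vertex `v` maximizing the script `z` that is a source among the maximizers, every in-arc
of `v` comes from a strictly lower vertex, so `fireBy d z v ≤ -indeg v` and `v` stays in debt. -/
theorem not_winnable_inDeg_sub_one [Nonempty V] (hori : IsOrientation d a)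
    (hacyc : AcyclicDigraph a) : ¬ Winnable d (fun v => (inDeg a v : ℤ) - 1) := by
  rintro ⟨h, hh, z, hz⟩
  obtain ⟨w, -, hw⟩ := univ.exists_max_image z univ_nonempty
  obtain ⟨v, hv, hsrc⟩ := hacyc.exists_source (M := {u | z u = z w}) ⟨w, rfl⟩
  have hterm : ∀ u, (d v u : ℤ) * (z u - z v) ≤ -(a u v : ℤ) := by
    intro u
    by_cases hu : z u = z w
    · simp [hsrc u hu, hu, hv.symm]
    · have hlt : z u - z v ≤ -1 := by
        have := hw u (mem_univ u)
        simp only [Set.mem_ofPred_eq] at hv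
        omega
      have had : (a u v : ℤ) ≤ d v u := by have := hori v u; omega
      nlinarith
  have hsum : fireBy d z v ≤ -(inDeg a v : ℤ) := by
    simp only [fireBy, inDeg, Nat.cast_sum, ← sum_neg_distrib]
    exact sum_le_sum fun u _ => hterm u
  have := hz v
  have := hh v
  simp only [fireBy] at hsum
  linarith

end Orientation

section Connected

omit [DecidableEq V]

variable {d : V → V → ℕ}

/-- Maximum principle: the maximizers of `w` are closed under adjacency. -/
lemma UConnected.eq_of_fireBy_eq_zero (hconn : UConnected d) {w : V → ℤ} (hw : fireBy d w = 0)
    (u v : V) : w u = w v := by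
  obtain ⟨m, -, hm⟩ := univ.exists_max_image w ⟨u, mem_univ u⟩
  have hmax : ∀ v, w v = w m := by
    intro v
    induction hconn m v with
    | refl => rfl
    | tail _ hpq ih =>
      rename_i p q _
      have hnonpos : ∀ x ∈ univ, (d p x : ℤ) * (w x - w p) ≤ 0 := fun x _ =>
        mul_nonpos_of_nonneg_of_nonpos (by positivity) (by linarith [hm x (mem_univ x)])
      have hzero := (sum_eq_zero_iff_of_nonpos hnonpos).mp (congrFun hw p) q
        (mem_univ q)
      rcases mul_eq_zero.mp hzero with h | h
      · exact absurd h (by positivity)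
      · linarith
  rw [hmax u, hmax v]

lemma UConnected.fireBy_injOn (hconn : UConnected d) (q : V) :
    Set.InjOn (fireBy d) {z | z q = 0} := by
  intro z hz w hw hzw
  funext v
  have := hconn.eq_of_fireBy_eq_zero (w := z - w) (by rw [fireBy_sub, hzw, sub_self]) v q
  simp only [Pi.sub_apply, Set.mem_ofPred_eq] at this hz hw
  linarith

lemma UConnected.exists_dist (hsym : ∀ u v, d u v = d v u) (hconn : UConnected d) (q : V) :
    ∃ δ : V → ℕ, (∀ v, v ≠ q → ∃ u, 0 < d v u ∧ δ u + 1 = δ v) ∧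
      (∀ v u, 0 < d v u → δ u ≤ δ v + 1) ∧ ∀ v, δ v < Fintype.card V := by
  let G := SimpleGraph.fromRel fun u v => 0 < d u v
  have hadj : ∀ u v, G.Adj u v → 0 < d u v := by
    intro u v h
    rcases ((SimpleGraph.fromRel_adj _ _ _).mp h).2 with h | h
    · exact h
    · rwa [hsym]
  have hreach : ∀ v, G.Reachable q v := by
    intro v
    induction hconn q v with
    | refl => rfl
    | tail _ hpr ih =>
      rename_i p r _
      by_cases hp : p = r
      · exact hp ▸ ih
      · exact ih.trans ((SimpleGraph.fromRel_adj _ _ _).mpr ⟨hp, .inl hpr⟩).reachable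
  have hnext : ∀ v u, G.Adj v u → G.dist q u ≤ G.dist q v + 1 := by
    intro v u hvu
    obtain ⟨p, hp⟩ := (hreach v).exists_walk_length_eq_dist
    simpa [hp] using SimpleGraph.dist_le (p.concat hvu)
  refine ⟨G.dist q, fun v hv => ?_, fun v u hvu => ?_, fun v => ?_⟩
  · obtain ⟨p, hp⟩ := (hreach v).exists_walk_length_eq_dist
    cases hrev : p.reverse with
    | nil => exact absurd rfl hv
    | @cons _ x _ hvx p' =>
      have hlen : p'.length + 1 = G.dist q v := by
        rw [← hp, ← p.length_reverse, hrev, SimpleGraph.Walk.length_cons]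
      have hle : G.dist q x ≤ p'.length := by
        rw [SimpleGraph.dist_comm]; exact SimpleGraph.dist_le p'
      exact ⟨x, hadj _ _ hvx, by have := hnext _ _ hvx.symm; omega⟩
  · by_cases h : v = u
    · subst h; omega
    · exact hnext v u ((SimpleGraph.fromRel_adj _ _ _).mpr ⟨h, .inl hvu⟩)
  · obtain ⟨p, hpath, hp⟩ := (hreach v).exists_path_of_dist
    exact hp ▸ hpath.length_lt

/-- With `B ≥ deg + 2`, under the script `B ^ (n - dist q v)` each `v ≠ q` gains more from its
neighbour one step closer to `q` than all neighbours one step farther can take away. -/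
lemma UConnected.exists_fireBy_pos (hsym : ∀ u v, d u v = d v u) (hconn : UConnected d)
    (q : V) : ∃ z : V → ℤ, ∀ v, v ≠ q → 1 ≤ fireBy d z v := by
  obtain ⟨δ, hdown, hstep, hlt⟩ := hconn.exists_dist hsym q
  set n := Fintype.card V
  set B : ℤ := ∑ v, (outDeg d v : ℤ) + 2
  refine ⟨fun v => B ^ (n - δ v), fun v hv => ?_⟩
  obtain ⟨u₀, hu₀, hδu₀⟩ := hdown v hv
  have hvn := hlt v
  set m := B ^ (n - δ v - 1)
  have hdeg : (outDeg d v : ℤ) = ∑ u, (d v u : ℤ) := by simp [outDeg]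
  have hB : (outDeg d v : ℤ) + 2 ≤ B := by
    have := single_le_sum (f := fun v => (outDeg d v : ℤ)) (fun _ _ => by positivity)
      (mem_univ v)
    linarith
  have hm : 1 ≤ m := one_le_pow₀ (by linarith)
  have hzv : B ^ (n - δ v) = B * m := by rw [← pow_succ']; congr 1; omega
  have hzu₀ : B ^ (n - δ u₀) = B * (B * m) := by rw [← hzv, ← pow_succ']; congr 1; omega
  have hterm : ∀ u ∈ univ, 0 ≤ (d v u : ℤ) * (B ^ (n - δ u) - m) := by
    intro u _
    rcases Nat.eq_zero_or_pos (d v u) with h0 | hpos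
    · simp [h0]
    · have := hstep v u hpos
      exact mul_nonneg (by positivity) (sub_nonneg.mpr (pow_le_pow_right₀ (by linarith) (by omega)))
  have hu₀term : (B * (B * m) - m) ≤ (d v u₀ : ℤ) * (B ^ (n - δ u₀) - m) := by
    rw [hzu₀]
    have h1 : (1 : ℤ) ≤ d v u₀ := by exact_mod_cast hu₀
    have hB1 : 1 ≤ B := by linarith [show (0 : ℤ) ≤ outDeg d v by positivity]
    have h2 : 0 ≤ B * (B * m) - m := by
      nlinarith [le_mul_of_one_le_left (by linarith) hB1 (b := m)]
    simpa using mul_le_mul_of_nonneg_right h1 h2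
  have hsplit : fireBy d (fun v => B ^ (n - δ v)) v
      = ∑ u, (d v u : ℤ) * (B ^ (n - δ u) - m) - (B * m - m) * outDeg d v := by
    rw [hdeg, fireBy, mul_sum, ← sum_sub_distrib]
    exact sum_congr rfl fun u _ => by rw [hzv]; ring
  have hsum := (single_le_sum hterm (mem_univ u₀)).trans' hu₀term
  have hD : 0 ≤ (outDeg d v : ℤ) := by positivity
  rw [hsplit]
  nlinarith [mul_nonneg (mul_nonneg (by linarith : (0 : ℤ) ≤ B - 1) (by linarith : (0 : ℤ) ≤ m))
    (by linarith : (0 : ℤ) ≤ B - 2 - outDeg d v)]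

lemma UConnected.exists_linEquiv_nonneg (hsym : ∀ u v, d u v = d v u) (hconn : UConnected d)
    (q : V) (h : V → ℤ) : ∃ c, LinEquiv d h c ∧ ∀ v, v ≠ q → 0 ≤ c v := by
  obtain ⟨z, hz⟩ := hconn.exists_fireBy_pos hsym q
  set N := ∑ v, |h v|
  refine ⟨h + fireBy d (N • z), ⟨N • z, fun v => rfl⟩, fun v hv => ?_⟩
  have hN : |h v| ≤ N := single_le_sum (f := fun v => |h v|) (fun _ _ => abs_nonneg _)
    (mem_univ v)
  rw [fireBy_smul, Pi.add_apply, Pi.smul_apply, smul_eq_mul]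
  have hN0 : 0 ≤ N := (abs_nonneg _).trans hN
  nlinarith [neg_abs_le (h v), mul_nonneg hN0 (sub_nonneg.mpr (hz v hv))]

end Connected

section Reduced

variable {d : V → V → ℕ}

lemma finite_setOf_sum_eq (m s : ℤ) :
    {f : V → ℤ | (∀ v, m ≤ f v) ∧ ∑ v, f v = s}.Finite := by
  refine (Set.finite_Icc (fun _ => m) (fun _ => s - (Fintype.card V - 1) * m)).subset ?_
  rintro f ⟨hm, hs⟩
  refine ⟨hm, fun v => ?_⟩
  have hle := single_le_sum (f := fun u => f u - m) (fun u _ => by linarith [hm u])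
    (mem_univ v)
  simp only [sum_sub_distrib, hs, sum_const, card_univ, nsmul_eq_mul] at hle
  linarith

lemma fireBy_indicator_of_mem {S : Finset V} {v : V} (hv : v ∈ S) :
    fireBy d (fun u => if u ∈ S then 1 else 0) v = -∑ u ∈ Sᶜ, (d v u : ℤ) := by
  rw [fireBy, ← sum_compl_add_sum S, ← sum_neg_distrib,
    sum_eq_zero (s := S) fun u hu => by simp [hu, hv], add_zero]
  exact sum_congr rfl fun u hu => by simp [mem_compl.mp hu, hv]

lemma fireBy_indicator_nonneg_of_notMem {S : Finset V} {v : V} (hv : v ∉ S) :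
    0 ≤ fireBy d (fun u => if u ∈ S then 1 else 0) v :=
  sum_nonneg fun u _ => by simp only [hv, if_false, sub_zero]; split_ifs <;> simp

/-- The `q`-reduced divisors of Baker–Norine. -/
def IsReducedAt (d : V → V → ℕ) (q : V) (c : V → ℤ) : Prop :=
  (∀ v, v ≠ q → 0 ≤ c v) ∧
    ∀ S : Finset V, q ∉ S → S.Nonempty → ∃ v ∈ S, c v < ∑ u ∈ Sᶜ, (d v u : ℤ)

/-- Among the scripts `z ≥ 0` with `z q = 0` keeping `c + fireBy d z` out of debt away from `q`
(a finite set, by injectivity of `fireBy` and conservation of degree), one with the largest total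
gives a reduced divisor: a legal set-firing would enlarge it. -/
lemma exists_isReducedAt (hsym : ∀ u v, d u v = d v u) (hconn : UConnected d) (q : V)
    {c : V → ℤ} (hc : ∀ v, v ≠ q → 0 ≤ c v) : ∃ c', LinEquiv d c c' ∧ IsReducedAt d q c' := by
  set Z := {z : V → ℤ | z q = 0 ∧ 0 ≤ z ∧ ∀ v, v ≠ q → 0 ≤ c v + fireBy d z v}
  have hq : ∀ z ∈ Z, c q ≤ c q + fireBy d z q := fun z ⟨hzq, hz, _⟩ => by
    simpa [fireBy, hzq] using sum_nonneg fun u _ => mul_nonneg (by positivity) (hz u)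
  have hZ : Z.Finite := by
    refine Set.Finite.of_finite_image (f := fun z => c + fireBy d z) ?_
      fun z hz w hw hzw => hconn.fireBy_injOn q hz.1 hw.1 (add_left_cancel hzw)
    refine (finite_setOf_sum_eq (min (c q) 0) (divDeg c)).subset ?_
    rintro _ ⟨z, hzZ, rfl⟩
    refine ⟨fun v => ?_, ?_⟩
    · by_cases hv : v = q
      · subst hv; exact (min_le_left _ _).trans (hq z hzZ)
      · exact (min_le_right _ _).trans (hzZ.2.2 v hv)
    · exact LinEquiv.divDeg_eq hsym (f := c) ⟨z, fun v => rfl⟩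
  obtain ⟨z, ⟨hzq, hz, hzc⟩, hmax⟩ :=
    Set.exists_max_image Z (fun z => ∑ v, z v) hZ ⟨0, rfl, le_rfl, by simpa [fireBy] using hc⟩
  refine ⟨c + fireBy d z, ⟨z, fun v => rfl⟩, hzc, ?_⟩
  by_contra! hlegal
  obtain ⟨S, hqS, hS, hfire⟩ := hlegal
  set χ : V → ℤ := fun u => if u ∈ S then 1 else 0
  have hmem : z + χ ∈ Z := by
    refine ⟨by simp [χ, hzq, hqS], fun u => add_nonneg (hz u) (by positivity), fun v hv => ?_⟩
    rw [fireBy_add, Pi.add_apply, ← add_assoc]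
    by_cases hvS : v ∈ S
    · have h1 := hfire v hvS
      rw [fireBy_indicator_of_mem hvS]
      simp only [Pi.add_apply] at h1
      linarith
    · linarith [fireBy_indicator_nonneg_of_notMem (d := d) hvS, hzc v hv]
  have hbig := hmax _ hmem
  have hχ : 0 < ∑ u, χ u := by
    simpa [χ, sum_ite_mem] using hS
  simp only [Pi.add_apply, sum_add_distrib] at hbig
  linarith

/-- Dhar's burning argument: removing from `S` a vertex `v` with `c v + 1 ≤ d(v, Sᶜ)` lowers the
right side by exactly `2 d(v, Sᶜ)`. -/
lemma burning_bound (hsym : ∀ u v, d u v = d v u) (hloop : Loopless d) {c : V → ℤ}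
    (S : Finset V) (hS : ∀ T ⊆ S, T.Nonempty → ∃ v ∈ T, c v < ∑ u ∈ Tᶜ, (d v u : ℤ)) :
    2 * ∑ v ∈ S, (c v + 1) ≤ ∑ v ∈ S, ((outDeg d v : ℤ) + ∑ u ∈ Sᶜ, (d v u : ℤ)) := by
  induction S using strongInduction with
  | H S ih =>
  rcases S.eq_empty_or_nonempty with rfl | hne
  · simp
  obtain ⟨v, hvS, hv⟩ := hS S subset_rfl hne
  have ih' := ih (S.erase v) (erase_ssubset hvS) fun T hT =>
    hS T (hT.trans (erase_subset v S))
  have hcompl : ∀ w, ∑ u ∈ (S.erase v)ᶜ, (d w u : ℤ) = d w v + ∑ u ∈ Sᶜ, (d w u : ℤ) := by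
    intro w
    rw [compl_erase, sum_insert (by simpa using hvS)]
  have hin : ∑ w ∈ S.erase v, (d w v : ℤ) = outDeg d v - ∑ u ∈ Sᶜ, (d v u : ℤ) := by
    have hsplit := sum_compl_add_sum S fun u => (d v u : ℤ)
    rw [← add_sum_erase S _ hvS, hloop v] at hsplit
    simp only [outDeg, Nat.cast_sum, ← hsplit, Nat.cast_zero, zero_add, hsym _ v]
    ring
  rw [← add_sum_erase S _ hvS, ← add_sum_erase S _ hvS]
  simp only [hcompl, sum_add_distrib, hin] at ih' ⊢
  linarith

theorem UConnected.two_mul_divDeg_add_card_le (hsym : ∀ u v, d u v = d v u) (hloop : Loopless d)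
    (hconn : UConnected d) [Nonempty V] {h : V → ℤ} (hh : ¬ Winnable d h) :
    2 * (divDeg h + Fintype.card V) ≤ ∑ v, (outDeg d v : ℤ) := by
  obtain ⟨q⟩ := ‹Nonempty V›
  obtain ⟨c₀, hhc₀, hc₀⟩ := hconn.exists_linEquiv_nonneg hsym q h
  obtain ⟨c, hc₀c, hc, hred⟩ := exists_isReducedAt hsym hconn q hc₀
  have hhc := hhc₀.trans hc₀c
  have hcq : c q < 0 := by
    by_contra! hcq
    exact hh ⟨c, fun v => if hv : v = q then hv ▸ hcq else hc v hv, hhc⟩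
  have hburn := burning_bound hsym hloop (univ.erase q)
    fun T hT hne => hred T (fun hq => by simpa using hT hq) hne
  have hq : ∑ v ∈ univ.erase q, (d v q : ℤ) = outDeg d q := by
    have := add_sum_erase univ (fun v => (d v q : ℤ)) (mem_univ q)
    simp only [hloop q, Nat.cast_zero, zero_add] at this
    rw [this, outDeg, Nat.cast_sum]
    exact sum_congr rfl fun v _ => by rw [hsym]
  rw [compl_erase, compl_univ, insert_empty_eq] at hburn
  simp only [sum_singleton, sum_add_distrib, hq, sum_const, nsmul_eq_mul,
    mul_one, card_erase_of_mem (mem_univ q), card_univ] at hburn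
  have hout := add_sum_erase univ (fun v => (outDeg d v : ℤ)) (mem_univ q)
  have hdeg := add_sum_erase univ c (mem_univ q)
  have hn : 1 ≤ Fintype.card V := Fintype.card_pos
  rw [← hhc.divDeg_eq hsym, divDeg, ← hdeg]
  push_cast [Nat.cast_sub hn] at hburn
  linarith

end Reduced

theorem stmt14_general {V : Type*} [Fintype V] [DecidableEq V]
    (d : V → V → ℕ) (hsym : ∀ u v, d u v = d v u) (hloop : Loopless d)
    (hconn : UConnected d) (f : V → ℤ)
    (a : V → V → ℕ) (hori : IsOrientation d a) (hacyc : AcyclicDigraph a)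
    (hunder : ∀ v, (outDeg d v : ℤ) - 1 - f v ≤ (inDeg a v : ℤ))
    (r s : ℤ) (hr : IsRank d f r)
    (hs : IsRank d (fun v => ((outDeg d v : ℤ) - 2) - f v) s)
    (e : ℤ) (he : 2 * e = ∑ v, ∑ u, (d v u : ℤ)) :
    r - s = divDeg f - e + Fintype.card V := by
  have := hr.nonempty
  have hout (v : V) : (outDeg d v : ℤ) = outDeg a v + inDeg a v := by
    exact_mod_cast hori.outDeg_eq v
  have hsum : ∑ v, (outDeg d v : ℤ) = 2 * e := by
    rw [he]; simp only [outDeg, Nat.cast_sum]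
  have he' : e = ∑ v, (outDeg a v : ℤ) := by
    have := congrArg (Nat.cast (R := ℤ)) hori.sum_outDeg
    push_cast at this
    linarith
  have hs' : s = -1 := hs.unique <| isRank_neg_one fun hw =>
    not_winnable_inDeg_sub_one hori hacyc <| hw.mono fun v => by linarith [hunder v]
  set ν : V → ℤ := fun v => (outDeg a v : ℤ) - 1
  have hdegν : divDeg ν = e - Fintype.card V := by
    simp [divDeg, ν, he', sum_sub_distrib]
  have hr' : r = divDeg (f - ν) - 1 := by
    refine hr.unique (isRank_of_not_winnable_sub (fun v => ?_) ?_ fun h hh => ?_)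
    · simp only [Pi.sub_apply, ν]
      linarith [hunder v, hout v]
    · rw [sub_sub_cancel]
      exact not_winnable_inDeg_sub_one hori.swap hacyc.swap
    · have := hconn.two_mul_divDeg_add_card_le hsym hloop hh
      simp only [sub_sub_cancel]
      linarith
  rw [hr', hs', divDeg_sub, hdegν]
  ring

/-- Riemann–Roch in a special case: if the dual chip-distribution
`x = K⁺ - f` of the divisor `f` lies under an acyclic orientation, then
`rank(f) - rank(K - f) = deg(f) - |E(G)| + |V(G)|`. -/
theorem stmt14 {V : Type*} [Fintype V] [DecidableEq V]
    (d : V → V → ℕ) (hsym : ∀ u v, d u v = d v u) (hloop : Loopless d)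
    (hconn : UConnected d) (f : V → ℤ)
    (a : V → V → ℕ) (hori : IsOrientation d a) (hacyc : AcyclicDigraph a)
    (hchip : ∀ v, 0 ≤ (outDeg d v : ℤ) - 1 - f v)
    (hunder : ∀ v, (outDeg d v : ℤ) - 1 - f v ≤ (inDeg a v : ℤ))
    (r s : ℤ) (hr : IsRank d f r)
    (hs : IsRank d (fun v => ((outDeg d v : ℤ) - 2) - f v) s)
    (e : ℤ) (he : 2 * e = ∑ v, ∑ u, (d v u : ℤ)) :
    r - s = divDeg f - e + Fintype.card V :=
  stmt14_general d hsym hloop hconn f a hori hacyc hunder r s hr hs e he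
end

section
/- Let G be a connected graph and f a divisor on G with f(v) ≤ d(v) - 1 for all v. Then there exists an effective divisor linearly equivalent to f if and only if the chip-distribution K⁺ - f is terminating, where K⁺(v) = d(v) - 1. -/
/- Common definitions for chip-firing on multigraphs/digraphs.

A digraph (without a fixed vertex enumeration) on a finite vertex type `V`
is given by its arc-multiplicity function `a : V → V → ℕ` (`a u v` = number
of arcs from `u` to `v`).  An undirected multigraph is the special case of a
symmetric multiplicity function `d` (`d u v` = number of edges between `u`
and `v`); then `outDeg d v = ∑ u, d v u` is the degree of `v`, and
`∑ v, ∑ u, d v u = 2 |E|`. -/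

variable {V : Type*} [Fintype V] [DecidableEq V]

/-! Firing an active vertex `v` adds `laplace d (Pi.single v 1)` to the distribution, so a
legal game that ends in a stable distribution `y` exhibits `K⁺ - y` as an effective divisor
equivalent to `f`. Conversely, if `f ~ h` with `h` effective, then `K⁺ - h = x + laplace d w`
for a potential `w ≥ 0`. Firing a vertex and lowering `w` there by one preserves this
equation, and an active vertex always has positive potential (at a minimum of `w` the
Laplacian is nonnegative, which would make the vertex inactive). Hence every legal game has
length at most `∑ w`, and one of them must stop. -/

section Laplacian

variable {V : Type*} [Fintype V]

def laplace (a : V → V → ℕ) : (V → ℤ) →+ (V → ℤ) :=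
  AddMonoidHom.mk' (fun z v => ∑ u, (a v u : ℤ) * (z u - z v)) fun z z' => by
    funext v
    simp only [Pi.add_apply, ← Finset.sum_add_distrib]
    exact Finset.sum_congr rfl fun u _ => by ring

theorem laplace_apply (a : V → V → ℕ) (z : V → ℤ) (v : V) :
    laplace a z v = ∑ u, (a v u : ℤ) * (z u - z v) := rfl

theorem laplace_const (a : V → V → ℕ) (c : ℤ) : laplace a (fun _ => c) = 0 := by
  funext v
  simp [laplace_apply]

theorem linEquiv_iff (d : V → V → ℕ) (f g : V → ℤ) :
    LinEquiv d f g ↔ ∃ z, ∀ v, g v = f v + laplace d z v := Iff.rfl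

theorem laplace_apply_nonneg_of_forall_le {a : V → V → ℕ} {w : V → ℤ} {v : V}
    (hv : ∀ u, w v ≤ w u) : 0 ≤ laplace a w v :=
  Finset.sum_nonneg fun u _ => mul_nonneg (Int.natCast_nonneg _) (sub_nonneg.2 (hv u))

end Laplacian

section ChipFiring

variable {V : Type*} [Fintype V] [DecidableEq V]

theorem legalGame_append {a : V → V → ℕ} {x : V → ℕ} {l l' : List V} :
    LegalGame a x (l ++ l') ↔ LegalGame a x l ∧ LegalGame a (run a x l) l' := by
  induction l generalizing x with
  | nil => simp [LegalGame, run]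
  | cons v l ih => simp only [List.cons_append, LegalGame, ih, run, and_assoc]

theorem exists_legalGame_length_of_not_terminates {a : V → V → ℕ} {x : V → ℕ}
    (hx : ¬ Terminates a x) (n : ℕ) : ∃ l, LegalGame a x l ∧ l.length = n := by
  induction n with
  | zero => exact ⟨[], trivial, rfl⟩
  | succ n ih =>
    obtain ⟨l, hl, rfl⟩ := ih
    obtain ⟨v, hv⟩ : ∃ v, outDeg a v ≤ run a x l v := by
      by_contra! h
      exact hx ⟨l, hl, h⟩
    exact ⟨l ++ [v], legalGame_append.2 ⟨hl, hv, trivial⟩, by simp⟩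

theorem cast_fire {d : V → V → ℕ} (hsym : ∀ u v, d u v = d v u) {x : V → ℕ} {w : V}
    (hw : outDeg d w ≤ x w) (v : V) :
    (fire d x w v : ℤ) = x v + laplace d (Pi.single w 1) v := by
  rcases eq_or_ne v w with rfl | hvw
  · have hlap : laplace d (Pi.single v 1) v = d v v - outDeg d v := by
      simp only [laplace_apply, outDeg, Nat.cast_sum, Pi.single_eq_same, mul_sub, mul_one,
        Finset.sum_sub_distrib]
      simp [Pi.single_apply]
    rw [hlap, fire, if_pos rfl, Nat.cast_sub (hw.trans (Nat.le_add_right _ _))]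
    push_cast
    ring
  · simp [laplace_apply, fire, hvw, Pi.single_apply, hsym w v]

theorem cast_run {d : V → V → ℕ} (hsym : ∀ u v, d u v = d v u) {x : V → ℕ} {l : List V}
    (hl : LegalGame d x l) (v : V) :
    (run d x l v : ℤ) = x v + laplace d (fun u => (l.count u : ℤ)) v := by
  induction l generalizing x with
  | nil => simp [run, laplace_apply]
  | cons w l ih =>
    have hcount :
        (fun u => ((w :: l).count u : ℤ)) = Pi.single w 1 + fun u => (l.count u : ℤ) := by
      funext u
      simp [List.count_cons, Pi.single_apply, eq_comm (a := w), add_comm]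
    rw [run, ih hl.2, cast_fire hsym hl.1, hcount, map_add, Pi.add_apply]
    ring

theorem LegalGame.length_le_sum {d : V → V → ℕ} (hsym : ∀ u v, d u v = d v u)
    {x : V → ℕ} {w : V → ℤ} (hw : 0 ≤ w) (hxw : ∀ v, (x v : ℤ) + laplace d w v < outDeg d v)
    {l : List V} (hl : LegalGame d x l) : (l.length : ℤ) ≤ ∑ v, w v := by
  induction l generalizing x w with
  | nil => simpa using Finset.sum_nonneg fun v _ => hw v
  | cons a l ih =>
    have hwa : 0 < w a := by
      by_contra! hwa
      have hmin : ∀ u, w a ≤ w u := fun u => hwa.trans (hw u)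
      have := hxw a
      have := laplace_apply_nonneg_of_forall_le (a := d) hmin
      have : (outDeg d a : ℤ) ≤ x a := by exact_mod_cast hl.1
      omega
    have hw' : 0 ≤ w - Pi.single a 1 := fun v => by
      rcases eq_or_ne v a with rfl | hva
      · simp only [Pi.sub_apply, Pi.single_eq_same, Pi.zero_apply]
        omega
      · simpa [hva] using hw v
    -- Firing `a` while lowering `w a` by one leaves `x + laplace d w` unchanged.
    have hxw' : ∀ v, (fire d x a v : ℤ) + laplace d (w - Pi.single a 1) v < outDeg d v := by
      intro v
      rw [cast_fire hsym hl.1, map_sub, Pi.sub_apply]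
      linarith [hxw v]
    have := ih hw' hxw' hl.2
    simp only [Pi.sub_apply, Finset.sum_sub_distrib, Finset.sum_pi_single', Finset.mem_univ,
      if_true] at this
    simp only [List.length_cons, Nat.cast_succ]
    linarith

theorem terminates_of_add_laplace_lt {d : V → V → ℕ} (hsym : ∀ u v, d u v = d v u)
    {x : V → ℕ} {w : V → ℤ} (hw : 0 ≤ w)
    (hxw : ∀ v, (x v : ℤ) + laplace d w v < outDeg d v) : Terminates d x := by
  by_contra hnt
  obtain ⟨l, hl, hlen⟩ := exists_legalGame_length_of_not_terminates hnt ((∑ v, w v).toNat + 1)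
  have := hl.length_le_sum hsym hw hxw
  omega

end ChipFiring

theorem stmt16_general {V : Type*} [Fintype V] [DecidableEq V]
    (d : V → V → ℕ) (hsym : ∀ u v, d u v = d v u) (f : V → ℤ)
    (x : V → ℕ) (hx : ∀ v, (x v : ℤ) = (outDeg d v : ℤ) - 1 - f v) :
    (∃ h : V → ℤ, Effective h ∧ LinEquiv d f h) ↔ Terminates d x := by
  constructor
  · rintro ⟨h, hh, hfh⟩
    obtain ⟨z, hz⟩ := (linEquiv_iff d f h).1 hfh
    set w : V → ℤ := fun v => (∑ u, |z u|) - z v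
    have hw : 0 ≤ w := fun v => sub_nonneg.2 <| (le_abs_self _).trans <|
      Finset.single_le_sum (fun u _ => abs_nonneg (z u)) (Finset.mem_univ v)
    have hlap : laplace d w = -laplace d z := by
      rw [show w = (fun _ => ∑ u, |z u|) - z from rfl, map_sub, laplace_const, zero_sub]
    refine terminates_of_add_laplace_lt hsym hw fun v => ?_
    rw [hlap, Pi.neg_apply, hx]
    linarith [hz v, hh v]
  · rintro ⟨l, hl, hterm⟩
    refine ⟨fun v => outDeg d v - 1 - run d x l v, fun v => ?_,
      (linEquiv_iff d f _).2 ⟨-fun u => (l.count u : ℤ), fun v => ?_⟩⟩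
    · have : (run d x l v : ℤ) < outDeg d v := by exact_mod_cast hterm v
      show (0 : ℤ) ≤ outDeg d v - 1 - run d x l v
      omega
    · rw [cast_run hsym hl, map_neg, Pi.neg_apply, hx]
      ring

/-- Baker–Norine duality: for a divisor `f` with `f(v) ≤ d(v) - 1`,
there is an effective divisor linearly equivalent to `f` iff the dual
chip-distribution `K⁺ - f` is terminating. -/
theorem stmt16 {V : Type*} [Fintype V] [DecidableEq V]
    (d : V → V → ℕ) (hsym : ∀ u v, d u v = d v u) (hloop : Loopless d)
    (hconn : UConnected d) (f : V → ℤ)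
    (hf : ∀ v, f v ≤ (outDeg d v : ℤ) - 1)
    (x : V → ℕ) (hx : ∀ v, (x v : ℤ) = (outDeg d v : ℤ) - 1 - f v) :
    (∃ h : V → ℤ, Effective h ∧ LinEquiv d f h) ↔ Terminates d x :=
  stmt16_general d hsym f x hx
end

section
/- Let D be a digraph, F a minimum cardinality feedback arc set of D, and v₀ a vertex such that F contains exactly the in-edges of v₀ among edges incident to v₀. Let F' be obtained from F by removing all in-edges of v₀ and adding all out-edges of v₀. Then F' is also a feedback arc set of D, and if D is Eulerian then |F'| = |F|, so F' is also of minimum cardinality. -/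
/- Common definitions for chip-firing on multigraphs/digraphs.

A digraph (without a fixed vertex enumeration) on a finite vertex type `V`
is given by its arc-multiplicity function `a : V → V → ℕ` (`a u v` = number
of arcs from `u` to `v`).  An undirected multigraph is the special case of a
symmetric multiplicity function `d` (`d u v` = number of edges between `u`
and `v`); then `outDeg d v = ∑ u, d v u` is the degree of `v`, and
`∑ v, ∑ u, d v u = 2 |E|`. -/

variable {V : Type*} [Fintype V] [DecidableEq V]

/-!
Removing the in-arcs of `v₀` from a feedback arc set and adding its out-arcs leaves `v₀` a sink
of the remaining digraph; the arcs not entering `v₀` are the same as before, and a directed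
cycle never passes through a sink, so the remaining digraph is still acyclic. The swap changes
the number of arcs by `d⁺(v₀) - d⁻(v₀)`, which vanishes when the digraph is Eulerian.
-/

section

variable {α : Type*}

theorem Relation.TransGen.of_noSucc {R S : α → α → Prop} {z : α}
    (hz : ∀ q, ¬ R z q) (hRS : ∀ p q, q ≠ z → R p q → S p q) {x y : α}
    (h : Relation.TransGen R x y) (hy : y ≠ z) : Relation.TransGen S x y := by
  induction h with
  | single hxy => exact .single (hRS _ _ hy hxy)
  | @tail b c _ hbc ih =>
    have hb : b ≠ z := by rintro rfl; exact hz c hbc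
    exact (ih hb).tail (hRS _ _ hy hbc)

theorem AcyclicDigraph.of_sink {r s : α → α → ℕ} (hs : AcyclicDigraph s) {v₀ : α}
    (hsink : ∀ q, r v₀ q = 0) (hle : ∀ p q, q ≠ v₀ → r p q ≤ s p q) : AcyclicDigraph r := by
  intro v hcyc
  have hv : v ≠ v₀ := by
    rintro rfl
    obtain ⟨q, hq, -⟩ := Relation.TransGen.head'_iff.mp hcyc
    simp [hsink] at hq
  refine hs v (hcyc.of_noSucc (z := v₀) (fun q => by simp [hsink]) (fun p q hq h => ?_) hv)
  exact h.trans_le (hle p q hq)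

def arcSwap [DecidableEq α] (a f : α → α → ℕ) (v₀ : α) : α → α → ℕ :=
  fun u v => if v = v₀ then 0 else if u = v₀ then a u v else f u v

def inArcs [DecidableEq α] (a : α → α → ℕ) (v₀ : α) : α → α → ℕ :=
  fun u v => if v = v₀ then a u v else 0

def outArcs [DecidableEq α] (a : α → α → ℕ) (v₀ : α) : α → α → ℕ :=
  fun u v => if u = v₀ then a u v else 0

theorem IsFAS.arcSwap [DecidableEq α] {a f : α → α → ℕ} (hfas : IsFAS a f) {v₀ : α}
    (hv₀ : a v₀ v₀ = 0) : IsFAS a (arcSwap a f v₀) := by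
  refine ⟨fun u v => ?_, hfas.2.of_sink (v₀ := v₀) (fun q => ?_) (fun p q hq => ?_)⟩
  · unfold _root_.arcSwap
    split_ifs
    exacts [Nat.zero_le _, le_rfl, hfas.1 u v]
  · by_cases hq : q = v₀ <;> simp [_root_.arcSwap, hq, hv₀]
  · by_cases hp : p = v₀ <;> simp [_root_.arcSwap, hp, hq]

theorem arcSize_add [Fintype α] (f g : α → α → ℕ) : arcSize (f + g) = arcSize f + arcSize g := by
  simp only [arcSize, Pi.add_apply, Finset.sum_add_distrib]

theorem arcSize_inArcs [Fintype α] [DecidableEq α] (a : α → α → ℕ) (v₀ : α) :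
    arcSize (inArcs a v₀) = inDeg a v₀ := by
  simp [arcSize, inArcs, inDeg]

theorem arcSize_outArcs [Fintype α] [DecidableEq α] (a : α → α → ℕ) (v₀ : α) :
    arcSize (outArcs a v₀) = outDeg a v₀ := by
  simp [arcSize, outArcs, outDeg]

theorem arcSwap_add_inArcs [DecidableEq α] {a f : α → α → ℕ} {v₀ : α}
    (hin : ∀ u, f u v₀ = a u v₀) (hout : ∀ u, f v₀ u = 0) :
    arcSwap a f v₀ + inArcs a v₀ = f + outArcs a v₀ := by
  have hv₀ : a v₀ v₀ = 0 := (hin v₀).symm.trans (hout v₀)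
  funext u v
  by_cases hv : v = v₀ <;> by_cases hu : u = v₀ <;>
    simp [arcSwap, inArcs, outArcs, hu, hv, hin, hout, hv₀]

theorem arcSize_arcSwap_add_inDeg [Fintype α] [DecidableEq α] {a f : α → α → ℕ} {v₀ : α}
    (hin : ∀ u, f u v₀ = a u v₀) (hout : ∀ u, f v₀ u = 0) :
    arcSize (arcSwap a f v₀) + inDeg a v₀ = arcSize f + outDeg a v₀ := by
  rw [← arcSize_inArcs, ← arcSize_outArcs, ← arcSize_add, ← arcSize_add,
    arcSwap_add_inArcs hin hout]

end

theorem stmt18_general {V : Type*} [Fintype V] [DecidableEq V]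
    (a : V → V → ℕ)
    (f : V → V → ℕ) (hfas : IsFAS a f)
    (v₀ : V) (hin : ∀ u, f u v₀ = a u v₀) (hout : ∀ u, f v₀ u = 0) :
    IsFAS a (fun u v => if v = v₀ then 0 else if u = v₀ then a u v else f u v) ∧
    (EulerianD a →
      arcSize (fun u v => if v = v₀ then 0 else if u = v₀ then a u v else f u v)
        = arcSize f) := by
  have hloop : a v₀ v₀ = 0 := (hin v₀).symm.trans (hout v₀)
  refine ⟨hfas.arcSwap hloop, fun heul => ?_⟩
  have hswap := arcSize_arcSwap_add_inDeg hin hout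
  rw [heul v₀] at hswap
  exact Nat.add_right_cancel hswap

/-- swapping, in a minimum feedback arc set `f`, the in-edges of a
vertex `v₀` (all of which lie in `f`, while no out-edge of `v₀` does) for the
out-edges of `v₀` yields again a feedback arc set; if `D` is Eulerian it has the
same cardinality, hence is again minimum. -/
theorem stmt18 {V : Type*} [Fintype V] [DecidableEq V]
    (a : V → V → ℕ) (hloop : Loopless a)
    (f : V → V → ℕ) (hfas : IsFAS a f)
    (hmin : ∀ g : V → V → ℕ, IsFAS a g → arcSize f ≤ arcSize g)
    (v₀ : V) (hin : ∀ u, f u v₀ = a u v₀) (hout : ∀ u, f v₀ u = 0) :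
    IsFAS a (fun u v => if v = v₀ then 0 else if u = v₀ then a u v else f u v) ∧
    (EulerianD a →
      arcSize (fun u v => if v = v₀ then 0 else if u = v₀ then a u v else f u v)
        = arcSize f) :=
  stmt18_general a f hfas v₀ hin hout
end
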